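/- For the explicit geodesic φ_t = (V/4π)(log((1+e^{4t}|z|²)/(1+|z|²)) − 2t) on ℙ¹ with ω₀ = (V/2π)ω_FS, the functional J(φ) = ∫ φ ω₀ − (1/2)∫ φ(ω₀ + ω_φ) satisfies (d²/dt²) J(φ_t) = (V/2π)² ∫_ℂ 8 e^{4t}|z|²/((1+e^{4t}|z|²)²) · i dz∧dz̄/(1+|z|²)² > 0, and the asymptotic slope is lim_{t→∞} (d/dt)J(φ_t) = V²/(2π). -/

import Mathlib

open MeasureTheory Filter

/-- The explicit geodesic potential `φ_t(z)` on `ℙ¹` (affine chart `z ∈ ℂ`). -/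
noncomputable def phiRay (V t : ℝ) (z : ℂ) : ℝ :=
  (V / (4 * Real.pi)) *
    (Real.log ((1 + Real.exp (4 * t) * Complex.normSq z) / (1 + Complex.normSq z)) - 2 * t)

/-- Density of `ω₀ = (V/2π)ω_FS` with respect to Lebesgue measure on `ℂ`
(recall `i dz∧dz̄ = 2 dA`). -/
noncomputable def omegaZeroDensity (V : ℝ) (z : ℂ) : ℝ :=
  (V / Real.pi) / (1 + Complex.normSq z) ^ 2

/-- Density of `ω_t = ω₀ + 2i∂∂̄φ_t = σ_t^*ω₀` with respect to Lebesgue measure on `ℂ`. -/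
noncomputable def omegaTDensity (V t : ℝ) (z : ℂ) : ℝ :=
  (V / Real.pi) * Real.exp (4 * t) / (1 + Real.exp (4 * t) * Complex.normSq z) ^ 2

/-- The functional `J(φ) = ∫ φ ω₀ − (1/2)∫ φ(ω₀ + ω_φ)` evaluated along the geodesic ray. -/
noncomputable def Jray (V t : ℝ) : ℝ :=
  (∫ z : ℂ, phiRay V t z * omegaZeroDensity V z) -
    (1 / 2) * ∫ z : ℂ, phiRay V t z * (omegaZeroDensity V z + omegaTDensity V t z)

/-! In the coordinate `s = |z|²` every integrand is radial, and `∫_ℂ g(|z|²) = π ∫₀^∞ g(s) ds`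
turns `J(φ_t)` and the claimed second derivative into one-variable integrals with explicit
antiderivatives. With `a = e^{4t}` and `x = 4t` this gives `J(φ_t) = V²/(8π) (x coth(x/2) - 2)`,
whose second derivative agrees with the claimed integral for `t ≠ 0`. At `t = 0` both sides are
continuous: `x coth(x/2)` is analytic, and the integral is continuous by dominated convergence.
The integrand is positive, and the slope tends to `V²/(2π)` because `(x coth(x/2))' → 1`. -/

open Set Real Topology

theorem integral_comp_normSq (g : ℝ → ℝ) :
    ∫ z : ℂ, g (Complex.normSq z) = π * ∫ s in Ioi 0, g s := by
  have hnorm : ∀ z : ℂ, Complex.normSq z = ‖z‖ ^ (2 : ℝ) := fun z => by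
    rw [rpow_two, Complex.sq_norm]
  have hjac : ∀ r : ℝ, (|(2 : ℝ)| * r ^ ((2 : ℝ) - 1)) • g (r ^ (2 : ℝ)) =
      2 * (r ^ (2 - 1) • g (r ^ (2 : ℝ))) := fun r => by norm_num; ring
  simp_rw [hnorm]
  rw [integral_fun_norm_addHaar volume (fun r => g (r ^ (2 : ℝ))), Complex.finrank_real_complex,
    Measure.real, Complex.volume_ball, ← integral_comp_rpow_Ioi g two_ne_zero]
  simp_rw [hjac, integral_const_mul]
  simp
  ring

noncomputable def logRatio (a s : ℝ) : ℝ := log ((1 + a * s) / (1 + s))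

theorem hasDerivAt_inv_one_add_mul {a s : ℝ} (h : 1 + a * s ≠ 0) :
    HasDerivAt (fun s => (1 + a * s)⁻¹) (-(a / (1 + a * s) ^ 2)) s := by
  have := (((hasDerivAt_id s).const_mul a).const_add 1).inv h
  refine this.congr_deriv ?_
  simp [neg_div]

theorem tendsto_inv_one_add_mul_atTop {a : ℝ} (ha : 0 < a) :
    Tendsto (fun s => (1 + a * s)⁻¹) atTop (𝓝 0) :=
  (tendsto_atTop_add_const_left _ 1 (tendsto_id.const_mul_atTop ha)).inv_tendsto_atTop

theorem hasDerivAt_logRatio {a s : ℝ} (ha : 0 < a) (hs : 0 ≤ s) :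
    HasDerivAt (logRatio a) ((1 + a * s)⁻¹ * a - (1 + s)⁻¹) s := by
  have h1 : 0 < 1 + s := by linarith
  have h2 : 0 < 1 + a * s := by positivity
  have := ((((hasDerivAt_id' s).const_mul a).const_add 1).fun_div
    ((hasDerivAt_id' s).const_add 1) h1.ne').log (div_pos h2 h1).ne'
  refine this.congr_deriv ?_
  field_simp

theorem tendsto_logRatio_atTop {a : ℝ} (ha : 0 < a) :
    Tendsto (logRatio a) atTop (𝓝 (log a)) := by
  have hinv : Tendsto (fun s : ℝ => s⁻¹) atTop (𝓝 0) := tendsto_inv_atTop_zero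
  have hratio : Tendsto (fun s : ℝ => (s⁻¹ + a) / (s⁻¹ + 1)) atTop (𝓝 a) := by
    have := (hinv.add_const a).div (hinv.add_const 1) (by norm_num)
    rw [zero_add, zero_add, div_one] at this
    exact this
  refine ((continuousAt_log ha.ne').tendsto.comp hratio).congr' ?_
  filter_upwards [eventually_gt_atTop 0] with s hs
  simp only [Function.comp, logRatio]
  congr 1
  field_simp

theorem abs_logRatio_le {a s : ℝ} (ha : 0 < a) (hs : 0 ≤ s) : |logRatio a s| ≤ |log a| := by
  have h1 : 0 < 1 + s := by linarith
  have h2 : 0 < 1 + a * s := by positivity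
  rw [logRatio]
  rcases le_total a 1 with hle | hge
  · have hlow : a ≤ (1 + a * s) / (1 + s) := by rw [le_div_iff₀ h1]; nlinarith
    have hup : (1 + a * s) / (1 + s) ≤ 1 := by rw [div_le_one h1]; nlinarith
    rw [abs_of_nonpos (log_nonpos (by positivity) hup), abs_of_nonpos (log_nonpos ha.le hle)]
    exact neg_le_neg (log_le_log ha hlow)
  · have hlow : 1 ≤ (1 + a * s) / (1 + s) := by rw [le_div_iff₀ h1]; nlinarith
    have hup : (1 + a * s) / (1 + s) ≤ a := by rw [div_le_iff₀ h1]; nlinarith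
    rw [abs_of_nonneg (log_nonneg hlow), abs_of_nonneg (log_nonneg hge)]
    exact log_le_log (by positivity) hup

theorem integrableOn_div_one_add_mul_sq {a : ℝ} (ha : 0 < a) :
    IntegrableOn (fun s => a / (1 + a * s) ^ 2) (Ioi 0) :=
  integrableOn_Ioi_deriv_of_nonneg' (g := fun s => -(1 + a * s)⁻¹)
    (fun s (hs : 0 ≤ s) => by
      simpa using (hasDerivAt_inv_one_add_mul (by positivity : 1 + a * s ≠ 0)).fun_neg)
    (fun s (hs : 0 < s) => by positivity)
    (by simpa using (tendsto_inv_one_add_mul_atTop ha).neg)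

theorem integrableOn_one_div_one_add_sq : IntegrableOn (fun s : ℝ => 1 / (1 + s) ^ 2) (Ioi 0) := by
  simpa using integrableOn_div_one_add_mul_sq one_pos

theorem integrableOn_logRatio_sub_mul {a : ℝ} (ha : 0 < a) (c : ℝ) {g : ℝ → ℝ}
    (hg : IntegrableOn g (Ioi 0)) : IntegrableOn (fun s => (logRatio a s - c) * g s) (Ioi 0) := by
  refine hg.bdd_mul (c := |log a| + |c|) ?_ ?_
  · exact ((measurable_log.comp (by fun_prop)).sub_const c).aestronglyMeasurable
  · refine (ae_restrict_iff' measurableSet_Ioi).2 (Eventually.of_forall fun s hs => ?_)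
    refine (norm_sub_le _ _).trans ?_
    rw [Real.norm_eq_abs, Real.norm_eq_abs]
    exact add_le_add (abs_logRatio_le ha (le_of_lt hs)) le_rfl

theorem integral_logRatio_sub_mul {a : ℝ} (ha : 0 < a) (ha1 : a ≠ 1) :
    ∫ s in Ioi 0, (logRatio a s - log a / 2) * (1 / (1 + s) ^ 2 - a / (1 + a * s) ^ 2) =
      (a + 1) * log a / (a - 1) - 2 := by
  have hsub : a - 1 ≠ 0 := sub_ne_zero.2 ha1
  have hderiv : ∀ s ∈ Ici (0 : ℝ), HasDerivAt
      (fun s => (logRatio a s - log a / 2) * ((1 + a * s)⁻¹ - (1 + s)⁻¹) +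
        (a + 1) / (a - 1) * logRatio a s + (1 + s)⁻¹ + (1 + a * s)⁻¹)
      ((logRatio a s - log a / 2) * (1 / (1 + s) ^ 2 - a / (1 + a * s) ^ 2)) s := by
    intro s (hs : 0 ≤ s)
    have hL := hasDerivAt_logRatio ha hs
    have hinv1 := hasDerivAt_inv_one_add_mul (by positivity : 1 + 1 * s ≠ 0)
    have hinva := hasDerivAt_inv_one_add_mul (by positivity : 1 + a * s ≠ 0)
    simp only [one_mul] at hinv1
    refine ((((hL.sub_const _).fun_mul (hinva.fun_sub hinv1)).add (hL.const_mul _)).add hinv1).add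
      hinva |>.congr_deriv ?_
    field_simp
    ring
  have hlim : Tendsto
      (fun s => (logRatio a s - log a / 2) * ((1 + a * s)⁻¹ - (1 + s)⁻¹) +
        (a + 1) / (a - 1) * logRatio a s + (1 + s)⁻¹ + (1 + a * s)⁻¹)
      atTop (𝓝 ((a + 1) * log a / (a - 1))) := by
    have hinv1 : Tendsto (fun s : ℝ => (1 + s)⁻¹) atTop (𝓝 0) := by
      simpa using tendsto_inv_one_add_mul_atTop one_pos
    have := (((((tendsto_logRatio_atTop ha).sub_const (log a / 2)).mul
      ((tendsto_inv_one_add_mul_atTop ha).sub hinv1)).add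
      ((tendsto_logRatio_atTop ha).const_mul ((a + 1) / (a - 1)))).add hinv1).add
      (tendsto_inv_one_add_mul_atTop ha)
    convert this using 2
    ring
  have hint := integrableOn_one_div_one_add_sq.sub (integrableOn_div_one_add_mul_sq ha)
  rw [integral_Ioi_of_hasDerivAt_of_tendsto' hderiv (integrableOn_logRatio_sub_mul ha _ hint) hlim]
  simp [logRatio]
  norm_num

noncomputable def convexityDensity (a s : ℝ) : ℝ := 8 * a * s / (1 + a * s) ^ 2 * (2 / (1 + s) ^ 2)

theorem convexityDensity_pos {a s : ℝ} (ha : 0 < a) (hs : 0 < s) : 0 < convexityDensity a s := by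
  unfold convexityDensity; positivity

theorem norm_convexityDensity_le {a s : ℝ} (ha : 0 ≤ a) (hs : 0 ≤ s) :
    ‖convexityDensity a s‖ ≤ 4 * (1 / (1 + s) ^ 2) := by
  have h : 8 * a * s / (1 + a * s) ^ 2 ≤ 2 := by
    rw [div_le_iff₀ (by positivity)]
    nlinarith [sq_nonneg (1 - a * s)]
  unfold convexityDensity
  rw [Real.norm_eq_abs, abs_of_nonneg (by positivity)]
  calc 8 * a * s / (1 + a * s) ^ 2 * (2 / (1 + s) ^ 2) ≤ 2 * (2 / (1 + s) ^ 2) := by gcongr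
    _ = 4 * (1 / (1 + s) ^ 2) := by ring

theorem integral_convexityDensity {a : ℝ} (ha : 0 < a) (ha1 : a ≠ 1) :
    ∫ s in Ioi 0, convexityDensity a s =
      16 * a * ((a + 1) * log a - 2 * (a - 1)) / (a - 1) ^ 3 := by
  have hsub : a - 1 ≠ 0 := sub_ne_zero.2 ha1
  have hderiv : ∀ s ∈ Ici (0 : ℝ), HasDerivAt
      (fun s => 16 * a * (a + 1) / (a - 1) ^ 3 * logRatio a s +
        16 * a / (a - 1) ^ 2 * ((1 + s)⁻¹ + (1 + a * s)⁻¹)) (convexityDensity a s) s := by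
    intro s (hs : 0 ≤ s)
    have hinv1 := hasDerivAt_inv_one_add_mul (by positivity : 1 + 1 * s ≠ 0)
    have hinva := hasDerivAt_inv_one_add_mul (by positivity : 1 + a * s ≠ 0)
    simp only [one_mul] at hinv1
    refine (((hasDerivAt_logRatio ha hs).const_mul _).add
      ((hinv1.add hinva).const_mul _)).congr_deriv ?_
    unfold convexityDensity
    field_simp
    ring
  have hlim : Tendsto
      (fun s => 16 * a * (a + 1) / (a - 1) ^ 3 * logRatio a s +
        16 * a / (a - 1) ^ 2 * ((1 + s)⁻¹ + (1 + a * s)⁻¹))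
      atTop (𝓝 (16 * a * (a + 1) / (a - 1) ^ 3 * log a)) := by
    have hinv1 : Tendsto (fun s : ℝ => (1 + s)⁻¹) atTop (𝓝 0) := by
      simpa using tendsto_inv_one_add_mul_atTop one_pos
    simpa using ((tendsto_logRatio_atTop ha).const_mul _).add
      ((hinv1.add (tendsto_inv_one_add_mul_atTop ha)).const_mul (16 * a / (a - 1) ^ 2))
  rw [integral_Ioi_of_hasDerivAt_of_nonneg' hderiv
    (fun s hs => (convexityDensity_pos ha hs).le) hlim]
  simp [logRatio]
  field_simp
  ring

theorem integrableOn_convexityDensity {a : ℝ} (ha : 0 ≤ a) :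
    IntegrableOn (convexityDensity a) (Ioi 0) :=
  (integrableOn_one_div_one_add_sq.const_mul 4).mono' (by unfold convexityDensity; fun_prop)
    (ae_restrict_of_forall_mem measurableSet_Ioi fun s hs =>
      norm_convexityDensity_le ha (le_of_lt hs))

theorem integral_convexityDensity_pos {a : ℝ} (ha : 0 < a) :
    0 < ∫ s in Ioi 0, convexityDensity a s := by
  rw [setIntegral_pos_iff_support_of_nonneg_ae
    (ae_restrict_of_forall_mem measurableSet_Ioi fun s hs => (convexityDensity_pos ha hs).le)
    (integrableOn_convexityDensity ha.le)]
  have : Function.support (convexityDensity a) ∩ Ioi 0 = Ioi 0 :=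
    inter_eq_right.2 fun s hs => (convexityDensity_pos ha hs).ne'
  simp [this]

theorem continuous_integral_convexityDensity_exp :
    Continuous fun x => ∫ s in Ioi 0, convexityDensity (exp x) s := by
  refine continuous_of_dominated
    (fun x => (integrableOn_convexityDensity (exp_pos x).le).aestronglyMeasurable)
    (fun x => ae_restrict_of_forall_mem measurableSet_Ioi fun s hs =>
      norm_convexityDensity_le (exp_pos x).le (le_of_lt hs))
    (integrableOn_one_div_one_add_sq.const_mul 4)
    (ae_restrict_of_forall_mem measurableSet_Ioi fun s (hs : 0 < s) => ?_)
  unfold convexityDensity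
  fun_prop (disch := intro; positivity)

theorem AnalyticAt.dslope {𝕜 E : Type*} [NontriviallyNormedField 𝕜] [NormedAddCommGroup E]
    [NormedSpace 𝕜 E] {f : 𝕜 → E} {a b : 𝕜} (ha : AnalyticAt 𝕜 f a) (hb : AnalyticAt 𝕜 f b) :
    AnalyticAt 𝕜 (dslope f a) b := by
  rcases eq_or_ne b a with rfl | hba
  · obtain ⟨p, hp⟩ := ha
    exact ⟨_, hp.has_fpower_series_dslope_fslope⟩
  · refine AnalyticAt.congr ?_ (dslope_eventuallyEq_slope_of_ne f hba).symm
    simp only [slope_fun_def]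
    exact ((analyticAt_id.sub analyticAt_const).inv (sub_ne_zero.2 hba)).smul
      (hb.sub analyticAt_const)

theorem exp_sub_one_ne_zero {x : ℝ} (hx : x ≠ 0) : exp x - 1 ≠ 0 := by
  rwa [sub_ne_zero, Ne, exp_eq_one_iff]

theorem dslope_exp_zero_pos (x : ℝ) : 0 < dslope exp 0 x := by
  rcases eq_or_ne x 0 with rfl | hx
  · simp [dslope_same]
  · rw [dslope_of_ne _ hx, slope_def_field, exp_zero, sub_zero]
    rcases hx.lt_or_gt with hneg | hpos
    · exact div_pos_of_neg_of_neg (by linarith [exp_lt_one_iff.2 hneg]) hneg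
    · exact div_pos (by linarith [one_lt_exp_iff.2 hpos]) hpos

/-- `x coth (x/2) - 2`, written through `dslope exp 0 x = (eˣ - 1)/x` so that it is visibly
analytic at `0`. -/
noncomputable def mulCothHalfSubTwo (x : ℝ) : ℝ := (exp x + 1) / dslope exp 0 x - 2

theorem mulCothHalfSubTwo_zero : mulCothHalfSubTwo 0 = 0 := by
  norm_num [mulCothHalfSubTwo, dslope_same]

theorem mulCothHalfSubTwo_of_ne {x : ℝ} (hx : x ≠ 0) :
    mulCothHalfSubTwo x = x * (exp x + 1) / (exp x - 1) - 2 := by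
  rw [mulCothHalfSubTwo, dslope_of_ne _ hx, slope_def_field, exp_zero, sub_zero, div_div_eq_mul_div,
    mul_comm]

theorem analyticOnNhd_mulCothHalfSubTwo : AnalyticOnNhd ℝ mulCothHalfSubTwo univ := fun x _ =>
  ((analyticAt_rexp.add analyticAt_const).div (analyticAt_rexp.dslope analyticAt_rexp)
    (dslope_exp_zero_pos x).ne').sub analyticAt_const

theorem deriv_mulCothHalfSubTwo_of_ne {x : ℝ} (hx : x ≠ 0) :
    deriv mulCothHalfSubTwo x = (exp x + 1) / (exp x - 1) - 2 * x * exp x / (exp x - 1) ^ 2 := by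
  have he := exp_sub_one_ne_zero hx
  have hderiv := (((hasDerivAt_id' x).fun_mul ((hasDerivAt_exp x).add_const 1)).fun_div
    ((hasDerivAt_exp x).sub_const 1) he).sub_const 2
  rw [((hderiv.congr_of_eventuallyEq ((eventually_ne_nhds hx).mono
    fun _ hy => mulCothHalfSubTwo_of_ne hy)).deriv)]
  field_simp
  ring

theorem deriv_deriv_mulCothHalfSubTwo_of_ne {x : ℝ} (hx : x ≠ 0) :
    deriv (deriv mulCothHalfSubTwo) x =
      2 * exp x * ((exp x + 1) * x - 2 * (exp x - 1)) / (exp x - 1) ^ 3 := by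
  have he := exp_sub_one_ne_zero hx
  have hderiv := (((hasDerivAt_exp x).add_const 1).fun_div ((hasDerivAt_exp x).sub_const 1) he).sub
    ((((hasDerivAt_id' x).const_mul 2).fun_mul (hasDerivAt_exp x)).fun_div
      (((hasDerivAt_exp x).sub_const 1).fun_pow 2) (pow_ne_zero 2 he))
  rw [((hderiv.congr_of_eventuallyEq ((eventually_ne_nhds hx).mono
    fun _ hy => deriv_mulCothHalfSubTwo_of_ne hy)).deriv)]
  field_simp
  ring

theorem tendsto_deriv_mulCothHalfSubTwo_atTop :
    Tendsto (deriv mulCothHalfSubTwo) atTop (𝓝 1) := by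
  have hexp : Tendsto (fun x : ℝ => exp (-x)) atTop (𝓝 0) := tendsto_exp_neg_atTop_nhds_zero
  have hmul : Tendsto (fun x : ℝ => x * exp (-x)) atTop (𝓝 0) := by
    simpa using tendsto_pow_mul_exp_neg_atTop_nhds_zero 1
  have hlim := (((tendsto_const_nhds (x := (1:ℝ))).add hexp).div
    ((tendsto_const_nhds (x := (1:ℝ))).sub hexp) (by norm_num)).sub
    ((hmul.const_mul 2).div (((tendsto_const_nhds (x := (1:ℝ))).sub hexp).pow 2) (by norm_num))
  norm_num at hlim
  refine hlim.congr' ?_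
  filter_upwards [eventually_gt_atTop 0] with x hx
  rw [deriv_mulCothHalfSubTwo_of_ne hx.ne', exp_neg]
  have he := exp_sub_one_ne_zero hx.ne'
  have := exp_pos x
  field_simp

theorem integral_radial_sub_half_integral_radial {g h₀ h₁ : ℝ → ℝ}
    (h₀int : IntegrableOn (fun s => g s * h₀ s) (Ioi 0))
    (h₁int : IntegrableOn (fun s => g s * h₁ s) (Ioi 0)) :
    (∫ z : ℂ, g (Complex.normSq z) * h₀ (Complex.normSq z)) -
        1 / 2 * ∫ z : ℂ, g (Complex.normSq z) * (h₀ (Complex.normSq z) + h₁ (Complex.normSq z)) =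
      π / 2 * ∫ s in Ioi 0, g s * (h₀ s - h₁ s) := by
  rw [integral_comp_normSq (fun s => g s * h₀ s),
    integral_comp_normSq (fun s => g s * (h₀ s + h₁ s))]
  simp_rw [mul_add, mul_sub]
  rw [integral_add h₀int h₁int, integral_sub h₀int h₁int]
  ring

theorem Jray_eq (V t : ℝ) : Jray V t = V ^ 2 / (8 * π) * mulCothHalfSubTwo (4 * t) := by
  set a := exp (4 * t) with ha
  have hpos : 0 < a := exp_pos _
  have hlog : log a = 4 * t := log_exp _
  have h₀int : IntegrableOn
      (fun s => V / (4 * π) * (logRatio a s - 2 * t) * (V / π / (1 + s) ^ 2)) (Ioi 0) :=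
    IntegrableOn.congr_fun
      ((integrableOn_logRatio_sub_mul hpos (2 * t) integrableOn_one_div_one_add_sq).const_mul
        (V ^ 2 / (4 * π ^ 2))) (fun s _ => by ring) measurableSet_Ioi
  have h₁int : IntegrableOn
      (fun s => V / (4 * π) * (logRatio a s - 2 * t) * (V / π * a / (1 + a * s) ^ 2)) (Ioi 0) :=
    IntegrableOn.congr_fun
      ((integrableOn_logRatio_sub_mul hpos (2 * t) (integrableOn_div_one_add_mul_sq hpos)).const_mul
        (V ^ 2 / (4 * π ^ 2))) (fun s _ => by ring) measurableSet_Ioi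
  have hprofile : ∀ s, V / (4 * π) * (logRatio a s - 2 * t) *
      (V / π / (1 + s) ^ 2 - V / π * a / (1 + a * s) ^ 2) =
      V ^ 2 / (4 * π ^ 2) *
        ((logRatio a s - log a / 2) * (1 / (1 + s) ^ 2 - a / (1 + a * s) ^ 2)) :=
    fun s => by rw [hlog]; ring
  calc Jray V t = π / 2 * ∫ s in Ioi 0, V / (4 * π) * (logRatio a s - 2 * t) *
        (V / π / (1 + s) ^ 2 - V / π * a / (1 + a * s) ^ 2) :=
      integral_radial_sub_half_integral_radial h₀int h₁int
    _ = V ^ 2 / (8 * π) * ∫ s in Ioi 0,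
        (logRatio a s - log a / 2) * (1 / (1 + s) ^ 2 - a / (1 + a * s) ^ 2) := by
      simp_rw [hprofile, integral_const_mul, ← mul_assoc]
      congr 1
      field_simp
      ring
    _ = V ^ 2 / (8 * π) * mulCothHalfSubTwo (4 * t) := by
      rcases eq_or_ne t 0 with rfl | ht
      · simp [ha, mulCothHalfSubTwo_zero]
      · have ha1 : a ≠ 1 := by rw [ha, Ne, exp_eq_one_iff]; simpa using ht
        rw [integral_logRatio_sub_mul hpos ha1, hlog,
          mulCothHalfSubTwo_of_ne (mul_ne_zero four_ne_zero ht)]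
        ring

theorem deriv_Jray (V : ℝ) :
    deriv (Jray V) = fun t => V ^ 2 / (2 * π) * deriv mulCothHalfSubTwo (4 * t) := by
  rw [show Jray V = fun t => V ^ 2 / (8 * π) * mulCothHalfSubTwo (4 * t) from funext (Jray_eq V)]
  simp only [deriv_const_mul_field', deriv_comp_mul_left, smul_eq_mul]
  ext t
  field_simp
  ring

theorem deriv_deriv_Jray (V t : ℝ) :
    deriv (deriv (Jray V)) t =
      V ^ 2 / (4 * π) * ∫ s in Ioi 0, convexityDensity (exp (4 * t)) s := by
  have hformal : deriv (deriv (Jray V)) =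
      fun t => 2 * V ^ 2 / π * deriv (deriv mulCothHalfSubTwo) (4 * t) := by
    simp only [deriv_Jray, deriv_const_mul_field', deriv_comp_mul_left, smul_eq_mul]
    ext t
    field_simp
    ring
  have hcont_formal : Continuous fun t => 2 * V ^ 2 / π * deriv (deriv mulCothHalfSubTwo) (4 * t) :=
    continuous_const.mul ((continuousOn_univ.1
      analyticOnNhd_mulCothHalfSubTwo.deriv.deriv.continuousOn).comp (continuous_const_mul 4))
  have hcont_integral : Continuous fun t =>
      V ^ 2 / (4 * π) * ∫ s in Ioi 0, convexityDensity (exp (4 * t)) s :=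
    continuous_const.mul (continuous_integral_convexityDensity_exp.comp (continuous_const_mul 4))
  refine congrFun (hformal.trans
    (hcont_formal.ext_on (dense_compl_singleton 0) hcont_integral fun τ hτ => ?_)) t
  have h4τ : 4 * τ ≠ 0 := mul_ne_zero four_ne_zero hτ
  dsimp only
  rw [deriv_deriv_mulCothHalfSubTwo_of_ne h4τ, integral_convexityDensity (exp_pos _)
    (by rwa [Ne, exp_eq_one_iff]), log_exp]
  field_simp
  ring

/-- Explicit strict convexity of `J` along the geodesic ray on `ℙ¹`:
`(d²/dt²)J(φ_t) = (V/2π)² ∫_ℂ 8e^{4t}|z|²/(1+e^{4t}|z|²)² · i dz∧dz̄/(1+|z|²)² > 0`,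
and the asymptotic slope is `lim_{t→∞} (d/dt)J(φ_t) = V²/(2π)`. -/
theorem Jray_second_derivative_and_asymptotic_slope (V : ℝ) (hV : 0 < V) :
    (∀ t : ℝ, deriv (deriv (Jray V)) t =
      (V / (2 * Real.pi)) ^ 2 *
        ∫ z : ℂ, (8 * Real.exp (4 * t) * Complex.normSq z /
            (1 + Real.exp (4 * t) * Complex.normSq z) ^ 2) *
          (2 / (1 + Complex.normSq z) ^ 2)) ∧
    (∀ t : ℝ, 0 < deriv (deriv (Jray V)) t) ∧
    Tendsto (deriv (Jray V)) atTop (nhds (V ^ 2 / (2 * Real.pi))) := by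
  refine ⟨fun t => ?_, fun t => ?_, ?_⟩
  · change _ = _ * ∫ z : ℂ, convexityDensity (exp (4 * t)) (Complex.normSq z)
    rw [deriv_deriv_Jray, integral_comp_normSq]
    field_simp
    ring
  · rw [deriv_deriv_Jray]
    exact mul_pos (by positivity) (integral_convexityDensity_pos (exp_pos _))
  · rw [deriv_Jray]
    simpa using (tendsto_deriv_mulCothHalfSubTwo_atTop.comp
      (tendsto_id.const_mul_atTop four_pos)).const_mul (V ^ 2 / (2 * π))
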